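/- arXiv:1603.08587 — 4 statements merged into one kernel-verified Lean document; each statement's English description precedes it below -/
import Mathlib

section
/- Suppose k is a nonnegative integer, S is a finite dimensional Hilbert space, Y is a normed vector space, P : S → Y is a polynomial map of degree at most k, a ∈ S, X ⊂ S, lim_{r→0+} r⁻¹ · sup{ dist(x,X) : x ∈ B̄(a,r) } = 0, and lim_{r→0+} r^{−k} · sup{ |P(x)| : x ∈ X ∩ B̄(a,r) } = 0. Then P = 0. -/
set_option maxHeartbeats 2000000


open Metric Set Module
open scoped Topology

noncomputable section

/-- `P` is a polynomial map of degree at most `k`, i.e. `P x = ∑_{i=0}^k φ_i (x, …, x)`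
for continuous `i`-linear maps `φ_i`. -/
def IsPolyMapLE {S Y : Type*} [NormedAddCommGroup S] [NormedSpace ℝ S]
    [NormedAddCommGroup Y] [NormedSpace ℝ Y] (k : ℕ) (P : S → Y) : Prop :=
  ∃ φ : (i : Fin (k+1)) → ContinuousMultilinearMap ℝ (fun _ : Fin (i : ℕ) => S) Y,
    ∀ x, P x = ∑ i, φ i fun _ => x

/-- a polynomial map of degree at most `k` which decays faster than `r^k`
on a set `X` that fills in `B̄(a,r)` to order `o(r)` vanishes identically. -/
theorem stmt_1 (k : ℕ)
    (S : Type) [NormedAddCommGroup S] [InnerProductSpace ℝ S] [FiniteDimensional ℝ S]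
    (Y : Type) [NormedAddCommGroup Y] [NormedSpace ℝ Y]
    (P : S → Y) (hP : IsPolyMapLE k P) (a : S) (X : Set S)
    (hfill : ∀ ε > 0, ∃ δ > 0, ∀ r : ℝ, 0 < r → r < δ →
      ∀ x ∈ closedBall a r, ∃ y ∈ X, dist x y ≤ ε * r)
    (hsmall : ∀ ε > 0, ∃ δ > 0, ∀ r : ℝ, 0 < r → r < δ →
      ∀ x ∈ X ∩ closedBall a r, ‖P x‖ ≤ ε * r ^ k) :
    ∀ x, P x = 0 := by
  obtain ⟨φ, hφ⟩ := hP
  -- A finite power series for `P` at `0`.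
  set q : FormalMultilinearSeries ℝ S Y := fun n =>
    if h : n < k + 1 then φ ⟨n, h⟩ else 0 with hqdef
  have hq : HasFiniteFPowerSeriesOnBall P q 0 (k+1) ⊤ := by
    refine HasFiniteFPowerSeriesOnBall.mk' (fun m hm => dif_neg (by omega))
      ENNReal.zero_lt_top (fun y _ => ?_)
    rw [zero_add, hφ y, ← Fin.sum_univ_eq_sum_range (fun i => q i fun _ => y) (k+1)]
    refine Finset.sum_congr rfl fun i _ => ?_
    rcases i with ⟨iv, hiv⟩
    show q iv (fun _ => y) = _
    simp only [hqdef]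
    rw [dif_pos hiv]
  -- Change origin to `a`.
  have hq2 := hq.changeOrigin (y := a) (by exact ENNReal.coe_lt_top)
  rw [zero_add] at hq2
  set p : FormalMultilinearSeries ℝ S Y := q.changeOrigin a with hpdef
  have hrep : ∀ h : S, P (a + h) = ∑ i ∈ Finset.range (k+1), p i fun _ => h := by
    intro h
    have hmem : h ∈ EMetric.ball (0 : S) (⊤ - ‖a‖₊) := by
      rw [ENNReal.top_sub_coe]
      exact EMetric.mem_ball.2 (edist_lt_top h 0)
    simpa [FormalMultilinearSeries.partialSum] using
      hq2.eq_partialSum h hmem (k+1) le_rfl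
  -- basic estimates
  have hbound : ∀ (m : ℕ) (h : S), ‖p m fun _ => h‖ ≤ ‖p m‖ * ‖h‖ ^ m := by
    intro m h
    simpa using (p m).le_opNorm fun _ => h
  have hhomog : ∀ (m : ℕ) (t : ℝ) (v : S),
      (p m fun _ => t • v) = t ^ m • p m fun _ => v := by
    intro m t v
    simpa [Finset.prod_const] using (p m).map_smul_univ (fun _ => t) (fun _ => v)
  -- main induction on the degree
  have main : ∀ j, j ≤ k + 1 → ∀ i < j, ∀ v : S, (p i fun _ => v) = 0 := by
    intro j
    induction j with
    | zero => intro _ i hi; omega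
    | succ n ih =>
      intro hn1
      have hnk : n ≤ k := by omega
      have IH : ∀ i < n, ∀ v : S, (p i fun _ => v) = 0 := ih (by omega)
      -- Sub-lemma A: sup of ‖P‖ on balls is o(r^n)
      have supb : ∀ ε > 0, ∃ δ > 0, ∀ r : ℝ, 0 < r → r < δ →
          ∀ x ∈ closedBall a r, ‖P x‖ ≤ ε * r ^ n := by
        intro ε hε
        set C : ℝ := 1 + ∑ i ∈ Finset.range (k+1), ‖p i‖ * i * 2 ^ i with hC
        have hCsum : 0 ≤ ∑ i ∈ Finset.range (k+1), ‖p i‖ * i * 2 ^ i :=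
          Finset.sum_nonneg fun i _ => by positivity
        have hC0 : 0 < C := by rw [hC]; linarith
        set ε₁ : ℝ := min 1 (ε / (2*C)) with hε₁def
        have hε₁pos : 0 < ε₁ := lt_min one_pos (by positivity)
        have hε₁1 : ε₁ ≤ 1 := min_le_left _ _
        have hε₁C : ε₁ ≤ ε / (2*C) := min_le_right _ _
        obtain ⟨δ₁, hδ₁, H1⟩ := hfill ε₁ hε₁pos
        obtain ⟨δ₂, hδ₂, H2⟩ := hsmall (ε / (2 * 2 ^ k)) (by positivity)
        refine ⟨min 1 (min δ₁ (δ₂ / 2)), by positivity, fun r hr0 hrδ x hx => ?_⟩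
        have hr1 : r ≤ 1 := le_of_lt (lt_of_lt_of_le hrδ (min_le_left _ _))
        have hrδ₁ : r < δ₁ := lt_of_lt_of_le hrδ ((min_le_right _ _).trans (min_le_left _ _))
        have hrδ₂ : 2 * r < δ₂ := by
          have := lt_of_lt_of_le hrδ ((min_le_right _ _).trans (min_le_right _ _))
          linarith
        obtain ⟨y, hyX, hxy⟩ := H1 r hr0 hrδ₁ x hx
        have hxar : dist x a ≤ r := mem_closedBall.1 hx
        have hε₁r : ε₁ * r ≤ r := mul_le_of_le_one_left hr0.le hε₁1
        have hya : dist y a ≤ 2 * r := by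
          calc dist y a ≤ dist y x + dist x a := dist_triangle _ _ _
            _ ≤ ε₁ * r + r := by rw [dist_comm]; exact add_le_add hxy hxar
            _ ≤ 2 * r := by linarith
        have hPy : ‖P y‖ ≤ ε / 2 * r ^ n := by
          have h2 := H2 (2*r) (by linarith) hrδ₂ y ⟨hyX, mem_closedBall.2 hya⟩
          have hrkn : r ^ k ≤ r ^ n := pow_le_pow_of_le_one hr0.le hr1 hnk
          calc ‖P y‖ ≤ ε / (2 * 2 ^ k) * (2*r) ^ k := h2
            _ = ε / 2 * r ^ k := by
                rw [mul_pow]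
                field_simp
            _ ≤ ε / 2 * r ^ n := by
                have := mul_le_mul_of_nonneg_left hrkn (by positivity : (0:ℝ) ≤ ε / 2)
                linarith
        have hxa : ‖x - a‖ ≤ 2 * r := by
          rw [← dist_eq_norm]; linarith
        have hya' : ‖y - a‖ ≤ 2 * r := by rw [← dist_eq_norm]; exact hya
        have hxy' : ‖x - y‖ ≤ ε₁ * r := by rw [← dist_eq_norm]; exact hxy
        have hterm : ∀ i ∈ Finset.range (k+1),
            ‖(p i fun _ => x - a) - (p i fun _ => y - a)‖
              ≤ ‖p i‖ * i * 2 ^ i * (ε₁ * r ^ n) := by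
          intro i _
          rcases lt_or_ge i n with h | h
          · rw [IH i h, IH i h, sub_self, norm_zero]; positivity
          · rcases Nat.eq_zero_or_pos i with rfl | hi0
            · have : (fun _ : Fin 0 => x - a) = (fun _ : Fin 0 => y - a) :=
                funext fun j => j.elim0
              rw [this, sub_self, norm_zero]; positivity
            · have key := (p i).norm_image_sub_le (fun _ => x - a) (fun _ => y - a)
              have hm1 : ‖(fun _ : Fin i => x - a)‖ ≤ 2 * r :=
                (pi_norm_le_iff_of_nonneg (by linarith)).2 fun _ => hxa
              have hm2 : ‖(fun _ : Fin i => y - a)‖ ≤ 2 * r :=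
                (pi_norm_le_iff_of_nonneg (by linarith)).2 fun _ => hya'
              have hmax : max ‖(fun _ : Fin i => x - a)‖ ‖(fun _ : Fin i => y - a)‖ ≤ 2 * r :=
                max_le hm1 hm2
              have hsub : ‖(fun _ : Fin i => x - a) - (fun _ : Fin i => y - a)‖ ≤ ε₁ * r := by
                refine (pi_norm_le_iff_of_nonneg (by positivity)).2 fun j => ?_
                have : ((fun _ : Fin i => x - a) - fun _ : Fin i => y - a) j = x - y := by
                  simp [sub_sub_sub_cancel_right]
                rw [this]; exact hxy'
              have hmaxnn : 0 ≤ max ‖(fun _ : Fin i => x - a)‖ ‖(fun _ : Fin i => y - a)‖ :=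
                le_max_of_le_left (norm_nonneg _)
              calc ‖(p i fun _ => x - a) - (p i fun _ => y - a)‖
                  ≤ ‖p i‖ * (Fintype.card (Fin i))
                    * max ‖(fun _ : Fin i => x - a)‖ ‖(fun _ : Fin i => y - a)‖
                      ^ (Fintype.card (Fin i) - 1)
                    * ‖(fun _ : Fin i => x - a) - (fun _ : Fin i => y - a)‖ := key
                _ ≤ ‖p i‖ * i * (2*r) ^ (i - 1) * (ε₁ * r) := by
                    rw [Fintype.card_fin]
                    gcongr
                _ = ‖p i‖ * i * 2 ^ (i-1) * ε₁ * (r ^ (i-1) * r) := by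
                    rw [mul_pow]; ring
                _ = ‖p i‖ * i * 2 ^ (i-1) * ε₁ * r ^ i := by
                    rw [← pow_succ, Nat.sub_add_cancel hi0]
                _ ≤ ‖p i‖ * i * 2 ^ i * ε₁ * r ^ n := by
                    have h2i : (2:ℝ) ^ (i-1) ≤ 2 ^ i := pow_le_pow_right₀ one_le_two (Nat.sub_le _ _)
                    have hri : r ^ i ≤ r ^ n := pow_le_pow_of_le_one hr0.le hr1 h
                    have h1 : ‖p i‖ * i * 2 ^ (i-1) * ε₁ ≤ ‖p i‖ * i * 2 ^ i * ε₁ := by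
                      gcongr
                    have h2 : 0 ≤ ‖p i‖ * i * 2 ^ (i-1) * ε₁ := by positivity
                    have h3 : 0 ≤ ‖p i‖ * i * 2 ^ i * ε₁ := by positivity
                    calc ‖p i‖ * i * 2 ^ (i-1) * ε₁ * r ^ i
                        ≤ ‖p i‖ * i * 2 ^ i * ε₁ * r ^ i := by gcongr
                      _ ≤ ‖p i‖ * i * 2 ^ i * ε₁ * r ^ n := by gcongr
                _ = ‖p i‖ * i * 2 ^ i * (ε₁ * r ^ n) := by ring
        have hPxPy : ‖P x - P y‖ ≤ ε / 2 * r ^ n := by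
          have ex : P x = ∑ i ∈ Finset.range (k+1), p i fun _ => x - a := by
            have := hrep (x - a); rwa [add_sub_cancel] at this
          have ey : P y = ∑ i ∈ Finset.range (k+1), p i fun _ => y - a := by
            have := hrep (y - a); rwa [add_sub_cancel] at this
          rw [ex, ey, ← Finset.sum_sub_distrib]
          have hstep : (C - 1) * ε₁ ≤ ε / 2 := by
            have h1 : (C-1) * ε₁ ≤ C * (ε / (2*C)) :=
              mul_le_mul (by linarith) hε₁C hε₁pos.le hC0.le
            have h2 : C * (ε / (2*C)) = ε / 2 := by field_simp
            linarith
          calc ‖∑ i ∈ Finset.range (k+1),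
                ((p i fun _ => x - a) - (p i fun _ => y - a))‖
              ≤ ∑ i ∈ Finset.range (k+1),
                ‖(p i fun _ => x - a) - (p i fun _ => y - a)‖ := norm_sum_le _ _
            _ ≤ ∑ i ∈ Finset.range (k+1), ‖p i‖ * i * 2 ^ i * (ε₁ * r ^ n) :=
                Finset.sum_le_sum hterm
            _ = (C - 1) * ε₁ * r ^ n := by
                rw [← Finset.sum_mul, hC]; ring
            _ ≤ ε / 2 * r ^ n := by
                have := mul_le_mul_of_nonneg_right hstep (by positivity : (0:ℝ) ≤ r ^ n)
                linarith
        calc ‖P x‖ = ‖(P x - P y) + P y‖ := by rw [sub_add_cancel]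
          _ ≤ ‖P x - P y‖ + ‖P y‖ := norm_add_le _ _
          _ ≤ ε / 2 * r ^ n + ε / 2 * r ^ n := add_le_add hPxPy hPy
          _ = ε * r ^ n := by ring
      -- Sub-lemma B: the n-th coefficient vanishes
      have hzero : ∀ v : S, (p n fun _ => v) = 0 := by
        intro v
        have hv1 : (0:ℝ) < ‖v‖ + 1 := by positivity
        have hle : ∀ ε > 0, ‖p n fun _ => v‖ ≤ ε := by
          intro ε hε
          set B : ℝ := ∑ i ∈ Finset.range (k+1), ‖p i‖ * (‖v‖+1) ^ i with hB
          have hB0 : 0 ≤ B := Finset.sum_nonneg fun i _ => by positivity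
          obtain ⟨δ, hδ, HA⟩ := supb (ε / (2 * (‖v‖+1) ^ k)) (by positivity)
          set t : ℝ := min (δ / (2*(‖v‖+1))) (min (ε/(2*(B+1))) 1) with htdef
          have ht0 : 0 < t := lt_min (by positivity) (lt_min (by positivity) one_pos)
          have ht1 : t ≤ 1 := (min_le_right _ _).trans (min_le_right _ _)
          have htε : t ≤ ε/(2*(B+1)) := (min_le_right _ _).trans (min_le_left _ _)
          have htδ : t * (‖v‖+1) < δ := by
            have h1 : t ≤ δ / (2*(‖v‖+1)) := min_le_left _ _
            calc t * (‖v‖+1) ≤ (δ / (2*(‖v‖+1))) * (‖v‖+1) := by gcongr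
              _ = δ / 2 := by field_simp
              _ < δ := by linarith
          have hr0 : 0 < t * (‖v‖+1) := mul_pos ht0 hv1
          have hmem : a + t • v ∈ closedBall a (t * (‖v‖+1)) := by
            rw [mem_closedBall, dist_eq_norm, add_sub_cancel_left, norm_smul,
              Real.norm_eq_abs, abs_of_pos ht0]
            have := norm_nonneg v
            nlinarith
          have hPt : ‖P (a + t • v)‖ ≤ ε / 2 * t ^ n := by
            have h2 := HA (t * (‖v‖+1)) hr0 htδ _ hmem
            have hpow : (‖v‖+1) ^ n ≤ (‖v‖+1) ^ k := pow_le_pow_right₀ (le_add_of_nonneg_left (norm_nonneg v)) hnk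
            have h3 : ε / (2 * (‖v‖+1) ^ k) * ((‖v‖+1)) ^ n ≤ ε / 2 := by
              rw [div_mul_eq_mul_div, div_le_div_iff₀ (by positivity) (by norm_num)]
              nlinarith
            calc ‖P (a + t • v)‖ ≤ ε / (2 * (‖v‖+1) ^ k) * (t * (‖v‖+1)) ^ n := h2
              _ = (ε / (2 * (‖v‖+1) ^ k) * ((‖v‖+1)) ^ n) * t ^ n := by
                  rw [mul_pow]; ring
              _ ≤ ε / 2 * t ^ n := by
                  have := mul_le_mul_of_nonneg_right h3 (pow_nonneg ht0.le n)
                  linarith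
          have hexp : P (a + t • v) = ∑ i ∈ Finset.range (k+1), t ^ i • (p i fun _ => v) := by
            rw [hrep (t • v)]
            exact Finset.sum_congr rfl fun i _ => hhomog i t v
          have hnmem : n ∈ Finset.range (k+1) := Finset.mem_range.2 (by omega)
          have hsplit : t ^ n • (p n fun _ => v)
              = P (a + t • v) - ∑ i ∈ (Finset.range (k+1)).erase n, t ^ i • (p i fun _ => v) := by
            rw [hexp, ← Finset.sum_erase_add _ _ hnmem, add_sub_cancel_left]
          have hterm2 : ∀ i ∈ (Finset.range (k+1)).erase n,
              ‖t ^ i • (p i fun _ => v)‖ ≤ t ^ (n+1) * (‖p i‖ * (‖v‖+1) ^ i) := by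
            intro i hi
            obtain ⟨hne, hmem'⟩ := Finset.mem_erase.1 hi
            rcases lt_or_ge i n with h | h
            · rw [IH i h, smul_zero, norm_zero]
              exact mul_nonneg (pow_nonneg ht0.le _) (by positivity)
            · have hgt : n + 1 ≤ i := by omega
              have h1 : t ^ i ≤ t ^ (n+1) := pow_le_pow_of_le_one ht0.le ht1 hgt
              have h2 : ‖p i fun _ => v‖ ≤ ‖p i‖ * (‖v‖+1) ^ i := by
                calc ‖p i fun _ => v‖ ≤ ‖p i‖ * ‖v‖ ^ i := hbound i v
                  _ ≤ ‖p i‖ * (‖v‖+1) ^ i := by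
                      gcongr; linarith
              rw [norm_smul, Real.norm_eq_abs, abs_of_pos (pow_pos ht0 i)]
              exact mul_le_mul h1 h2 (norm_nonneg _) (pow_nonneg ht0.le _)
          have hsum : ∑ i ∈ (Finset.range (k+1)).erase n, ‖t ^ i • (p i fun _ => v)‖
              ≤ t ^ n * (ε / 2) := by
            have h1 : ∑ i ∈ (Finset.range (k+1)).erase n, ‖t ^ i • (p i fun _ => v)‖
                ≤ ∑ i ∈ (Finset.range (k+1)).erase n, t ^ (n+1) * (‖p i‖ * (‖v‖+1) ^ i) :=
              Finset.sum_le_sum hterm2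
            have h2 : ∑ i ∈ (Finset.range (k+1)).erase n, t ^ (n+1) * (‖p i‖ * (‖v‖+1) ^ i)
                ≤ ∑ i ∈ Finset.range (k+1), t ^ (n+1) * (‖p i‖ * (‖v‖+1) ^ i) :=
              Finset.sum_le_sum_of_subset_of_nonneg (Finset.erase_subset _ _)
                (fun i _ _ => mul_nonneg (pow_nonneg ht0.le _) (by positivity))
            have h3 : ∑ i ∈ Finset.range (k+1), t ^ (n+1) * (‖p i‖ * (‖v‖+1) ^ i)
                = t ^ n * (t * B) := by
              rw [← Finset.mul_sum, ← hB, pow_succ]; ring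
            have h4 : t * B ≤ ε / 2 := by
              rw [le_div_iff₀ (by positivity)] at htε
              nlinarith
            have h5 : t ^ n * (t * B) ≤ t ^ n * (ε / 2) := by
              have := mul_le_mul_of_nonneg_left h4 (pow_nonneg ht0.le n)
              linarith
            linarith
          have hfinal : t ^ n * ‖p n fun _ => v‖ ≤ t ^ n * ε := by
            calc t ^ n * ‖p n fun _ => v‖
                = ‖t ^ n • (p n fun _ => v)‖ := by
                  rw [norm_smul, Real.norm_eq_abs, abs_of_pos (pow_pos ht0 n)]
              _ = ‖P (a + t • v) - ∑ i ∈ (Finset.range (k+1)).erase n,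
                    t ^ i • (p i fun _ => v)‖ := by rw [hsplit]
              _ ≤ ‖P (a + t • v)‖ + ‖∑ i ∈ (Finset.range (k+1)).erase n,
                    t ^ i • (p i fun _ => v)‖ := norm_sub_le _ _
              _ ≤ ε / 2 * t ^ n + t ^ n * (ε / 2) :=
                  add_le_add hPt ((norm_sum_le _ _).trans hsum)
              _ = t ^ n * ε := by ring
          exact le_of_mul_le_mul_left hfinal (pow_pos ht0 n)
        have h0 : ‖p n fun _ => v‖ ≤ 0 :=
          le_of_forall_pos_le_add (fun ε hε => by simpa using hle ε hε)
        exact norm_le_zero_iff.1 h0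
      intro i hi v
      rcases Nat.lt_succ_iff_lt_or_eq.1 hi with h | h
      · exact IH i h v
      · subst h; exact hzero v
  intro x
  have h := hrep (x - a)
  rw [add_sub_cancel] at h
  rw [h]
  exact Finset.sum_eq_zero fun i hi => main (k+1) le_rfl i (Finset.mem_range.1 hi) _

end
end

section
/- Suppose m is a positive integer, g : ℝ^m → [0,∞] is an arbitrary function, and 0 < l < ∞. Then for Lebesgue almost all a ∈ ℝ^m, the quantity limsup_{r→0+} r^{−l} · sup{ g(x) : x ∈ B(a,r) } equals either 0 or ∞. -/
open Metric Set Filter MeasureTheory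
open scoped Topology ENNReal Pointwise

/-!
For `M` and `δ > 0` the set `A` of points `a` with `sup_{B(a,r)} g ≤ M r^l` for all `0 < r < δ` is
closed. If `limsup_{r→0} r^{-l} sup_{B(a,r)} g < ∞`, then `a` lies in such a set with `M ∈ ℕ`,
`δ = 1/(k+1)`; countably many sets suffice, so almost every such `a` is a Lebesgue density point
of one of them. At a density point every `x ∈ B(a,r)` is within `εr` of some `b ∈ A`, whence
`g x ≤ M (εr)^l`; thus the limsup is at most `M ε^l` for every `ε > 0`, i.e. it is `0`.
-/

theorem ENNReal.rpow_neg_mul_le_iff {x s t : ℝ≥0∞} {l : ℝ} (hx₀ : x ≠ 0) (hx : x ≠ ∞) :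
    x ^ (-l) * s ≤ t ↔ s ≤ x ^ l * t := by
  rw [ENNReal.rpow_neg, ENNReal.inv_mul_le_iff (ENNReal.rpow_pos (pos_iff_ne_zero.2 hx₀) hx).ne'
    (ENNReal.rpow_ne_top_of_ne_zero hx₀ hx)]

theorem lowerSemicontinuous_iSup_ball {X α : Type*} [PseudoMetricSpace X] [CompleteLinearOrder α]
    (g : X → α) (r : ℝ) : LowerSemicontinuous fun a => ⨆ x ∈ ball a r, g x := by
  intro a t ht
  obtain ⟨x, hx, htx⟩ : ∃ x ∈ ball a r, t < g x := by simpa only [lt_iSup_iff, exists_prop] using ht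
  filter_upwards [isOpen_ball.mem_nhds (mem_ball_comm.1 hx)] with a' ha'
  exact htx.trans_le (le_biSup g (mem_ball_comm.1 ha'))

-- Cover the unit ball by finitely many `ε/2`-balls; `s` meets each rescaled copy around `a`.
theorem eventually_forall_ball_inter_nonempty_of_density_one {E : Type*} [NormedAddCommGroup E]
    [NormedSpace ℝ E] [MeasurableSpace E] [BorelSpace E] [FiniteDimensional ℝ E]
    (μ : Measure E) [μ.IsAddHaarMeasure] {s : Set E} {a : E}
    (h : Tendsto (fun r => μ (s ∩ closedBall a r) / μ (closedBall a r)) (𝓝[>] 0) (𝓝 1))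
    {ε : ℝ} (hε : 0 < ε) :
    ∀ᶠ r in 𝓝[>] (0 : ℝ), ∀ x ∈ ball a r, (s ∩ ball x (ε * r)).Nonempty := by
  obtain ⟨c, -, hc, hcover⟩ :=
    finite_cover_balls_of_compact (isCompact_closedBall (0 : E) 1) (half_pos hε)
  have hmeet : ∀ᶠ r in 𝓝[>] (0 : ℝ), ∀ p ∈ c, (s ∩ ({a} + r • ball p (ε / 2))).Nonempty :=
    hc.eventually_all.2 fun p _ => μ.eventually_nonempty_inter_smul_of_density_one s a h _
      measurableSet_ball (measure_ball_pos μ p (half_pos hε)).ne'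
  filter_upwards [hmeet, self_mem_nhdsWithin] with r hr (hr₀ : 0 < r) x hx
  set y := r⁻¹ • (x - a)
  have hy : y ∈ closedBall (0 : E) 1 := by
    rw [mem_closedBall_zero_iff, norm_smul, Real.norm_of_nonneg (inv_nonneg.2 hr₀.le),
      inv_mul_le_one₀ hr₀, ← dist_eq_norm]
    exact (mem_ball.1 hx).le
  obtain ⟨p, hp, hyp⟩ := mem_iUnion₂.1 (hcover hy)
  have hball : {a} + r • ball p (ε / 2) = ball (a + r • p) (r * (ε / 2)) := by
    rw [_root_.smul_ball hr₀.ne', singleton_add_ball, Real.norm_of_nonneg hr₀.le]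
  obtain ⟨b, hbs, hb⟩ := hr p hp
  rw [hball] at hb
  have hx' : x ∈ ball (a + r • p) (r * (ε / 2)) := by
    have : x - (a + r • p) = r • (y - p) := by
      simp only [y, smul_sub, smul_inv_smul₀ hr₀.ne']
      abel
    rw [mem_ball, dist_eq_norm, this, norm_smul, Real.norm_of_nonneg hr₀.le, ← dist_eq_norm]
    exact mul_lt_mul_of_pos_left (mem_ball.1 hyp) hr₀
  refine ⟨b, hbs, ?_⟩
  rw [mem_ball]
  calc dist b x ≤ dist b (a + r • p) + dist x (a + r • p) := dist_triangle_right _ _ _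
    _ < r * (ε / 2) + r * (ε / 2) := add_lt_add (mem_ball.1 hb) (mem_ball.1 hx')
    _ = ε * r := by ring

section GrowthSet

variable {X : Type*} [PseudoMetricSpace X]

def ballSupGrowthSet (g : X → ℝ≥0∞) (l : ℝ) (M : ℝ≥0∞) (δ : ℝ) : Set X :=
  {a | ∀ r ∈ Ioo 0 δ, ⨆ x ∈ ball a r, g x ≤ M * ENNReal.ofReal r ^ l}

theorem isClosed_ballSupGrowthSet (g : X → ℝ≥0∞) (l : ℝ) (M : ℝ≥0∞) (δ : ℝ) :
    IsClosed (ballSupGrowthSet g l M δ) := by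
  simp only [ballSupGrowthSet, ofPred_forall]
  exact isClosed_iInter fun r => isClosed_iInter fun _ =>
    (lowerSemicontinuous_iSup_ball g r).isClosed_preimage (M * ENNReal.ofReal r ^ l)

theorem exists_mem_ballSupGrowthSet_of_limsup_lt {g : X → ℝ≥0∞} {l : ℝ} {a : X} {M : ℝ≥0∞}
    (h : limsup (fun r : ℝ => ENNReal.ofReal r ^ (-l) * ⨆ x ∈ ball a r, g x) (𝓝[>] 0) < M) :
    ∃ k : ℕ, a ∈ ballSupGrowthSet g l M (1 / (k + 1)) := by
  obtain ⟨u, hu, hsub⟩ := mem_nhdsGT_iff_exists_Ioo_subset.1 (eventually_lt_of_limsup_lt h)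
  obtain ⟨k, hk⟩ := exists_nat_one_div_lt (mem_Ioi.1 hu)
  refine ⟨k, fun r hr => ?_⟩
  have hlt : ENNReal.ofReal r ^ (-l) * ⨆ x ∈ ball a r, g x < M := hsub ⟨hr.1, hr.2.trans hk⟩
  rw [mul_comm M]
  exact (ENNReal.rpow_neg_mul_le_iff (ENNReal.ofReal_pos.2 hr.1).ne' ENNReal.ofReal_ne_top).1
    hlt.le

end GrowthSet

section Density

variable {E : Type*} [NormedAddCommGroup E] [NormedSpace ℝ E] [MeasurableSpace E] [BorelSpace E]
  [FiniteDimensional ℝ E] {μ : Measure E} [μ.IsAddHaarMeasure] {g : E → ℝ≥0∞} {l : ℝ} {M : ℝ≥0∞}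
  {δ : ℝ} {a : E}

theorem eventually_rpow_neg_mul_iSup_ball_le_of_density_one (hl : 0 ≤ l) (hδ : 0 < δ)
    (h : Tendsto (fun r => μ (ballSupGrowthSet g l M δ ∩ closedBall a r) / μ (closedBall a r))
      (𝓝[>] 0) (𝓝 1))
    {ε : ℝ} (hε : 0 < ε) (hε₁ : ε ≤ 1) :
    ∀ᶠ r in 𝓝[>] (0 : ℝ),
      ENNReal.ofReal r ^ (-l) * ⨆ x ∈ ball a r, g x ≤ M * ENNReal.ofReal ε ^ l := by
  filter_upwards [eventually_forall_ball_inter_nonempty_of_density_one μ h hε, self_mem_nhdsWithin,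
    eventually_nhdsWithin_of_eventually_nhds (gt_mem_nhds hδ)] with r hr (hr₀ : 0 < r) hrδ
  rw [ENNReal.rpow_neg_mul_le_iff (ENNReal.ofReal_pos.2 hr₀).ne' ENNReal.ofReal_ne_top]
  refine iSup₂_le fun x hx => ?_
  obtain ⟨b, hb, hbx⟩ := hr x hx
  calc g x ≤ ⨆ y ∈ ball b (ε * r), g y := le_biSup g (mem_ball_comm.1 hbx)
    _ ≤ M * ENNReal.ofReal (ε * r) ^ l :=
      hb (ε * r) ⟨by positivity, (mul_le_of_le_one_left hr₀.le hε₁).trans_lt hrδ⟩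
    _ = ENNReal.ofReal r ^ l * (M * ENNReal.ofReal ε ^ l) := by
      rw [ENNReal.ofReal_mul hε.le, ENNReal.mul_rpow_of_nonneg _ _ hl]
      ring

theorem limsup_rpow_neg_mul_iSup_ball_eq_zero_of_density_one (hl : 0 < l) (hM : M ≠ ∞)
    (hδ : 0 < δ)
    (h : Tendsto (fun r => μ (ballSupGrowthSet g l M δ ∩ closedBall a r) / μ (closedBall a r))
      (𝓝[>] 0) (𝓝 1)) :
    limsup (fun r : ℝ => ENNReal.ofReal r ^ (-l) * ⨆ x ∈ ball a r, g x) (𝓝[>] 0) = 0 := by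
  have hpow : Tendsto (fun ε : ℝ => ENNReal.ofReal ε ^ l) (𝓝 0) (𝓝 (ENNReal.ofReal 0 ^ l)) :=
    (ENNReal.continuous_rpow_const.comp ENNReal.continuous_ofReal).tendsto 0
  rw [ENNReal.ofReal_zero, ENNReal.zero_rpow_of_pos hl] at hpow
  have hlim : Tendsto (fun ε : ℝ => M * ENNReal.ofReal ε ^ l) (𝓝[>] 0) (𝓝 0) := by
    simpa using ENNReal.Tendsto.const_mul (hpow.mono_left nhdsWithin_le_nhds) (Or.inr hM)
  refine le_antisymm (ge_of_tendsto hlim ?_) bot_le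
  filter_upwards [self_mem_nhdsWithin,
    eventually_nhdsWithin_of_eventually_nhds (gt_mem_nhds one_pos)] with ε (hε : 0 < ε) hε₁
  exact limsup_le_of_le (by isBoundedDefault)
    (eventually_rpow_neg_mul_iSup_ball_le_of_density_one hl.le hδ h hε hε₁.le)

end Density

theorem stmt_7_general (m : ℕ)
    (g : EuclideanSpace ℝ (Fin m) → ℝ≥0∞) (l : ℝ) (hl : 0 < l) :
    ∀ᵐ a ∂(volume : Measure (EuclideanSpace ℝ (Fin m))),
      Filter.limsup
          (fun r : ℝ => (ENNReal.ofReal r) ^ (-l) * ⨆ x ∈ ball a r, g x)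
          (𝓝[>] (0 : ℝ)) = 0 ∨
      Filter.limsup
          (fun r : ℝ => (ENNReal.ofReal r) ^ (-l) * ⨆ x ∈ ball a r, g x)
          (𝓝[>] (0 : ℝ)) = ⊤ := by
  have hdensity : ∀ᵐ a ∂(volume : Measure (EuclideanSpace ℝ (Fin m))), ∀ M k : ℕ,
      a ∈ ballSupGrowthSet g l M (1 / (k + 1)) →
        Tendsto (fun r => volume (ballSupGrowthSet g l M (1 / (k + 1)) ∩ closedBall a r) /
          volume (closedBall a r)) (𝓝[>] 0) (𝓝 1) := by
    simp only [ae_all_iff]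
    intro M k
    filter_upwards [Besicovitch.ae_tendsto_measure_inter_div_of_measurableSet volume
      (isClosed_ballSupGrowthSet g l M (1 / (k + 1))).measurableSet] with a ha haA
    rwa [indicator_of_mem haA, Pi.one_apply] at ha
  filter_upwards [hdensity] with a ha
  refine or_iff_not_imp_right.2 fun htop => ?_
  obtain ⟨M, hM⟩ := ENNReal.exists_nat_gt htop
  obtain ⟨k, hk⟩ := exists_mem_ballSupGrowthSet_of_limsup_lt hM
  exact limsup_rpow_neg_mul_iSup_ball_eq_zero_of_density_one hl (ENNReal.natCast_ne_top M)
    Nat.one_div_pos_of_nat (ha M k hk)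

/-- for an arbitrary function `g : ℝ^m → [0,∞]` and `0 < l < ∞`, at Lebesgue
almost every point `a` the quantity `limsup_{r→0+} r^{-l} · sup {g x : x ∈ B(a,r)}`
equals either `0` or `∞`. -/
theorem stmt_7 (m : ℕ) (hm : 0 < m)
    (g : EuclideanSpace ℝ (Fin m) → ℝ≥0∞) (l : ℝ) (hl : 0 < l) :
    ∀ᵐ a ∂(volume : Measure (EuclideanSpace ℝ (Fin m))),
      Filter.limsup
          (fun r : ℝ => (ENNReal.ofReal r) ^ (-l) * ⨆ x ∈ ball a r, g x)
          (𝓝[>] (0 : ℝ)) = 0 ∨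
      Filter.limsup
          (fun r : ℝ => (ENNReal.ofReal r) ^ (-l) * ⨆ x ∈ ball a r, g x)
          (𝓝[>] (0 : ℝ)) = ⊤ :=
  stmt_7_general m g l hl
end

section
/- Suppose k is a nonnegative integer, m and n are positive integers with m < n, 0 ≤ α ≤ 1, γ = k if α = 0 and γ = (k,α) if α > 0, U is an open subset of ℝ^m, f : U → ℝ^{n−m}, and X is the set of points at which f is pointwise differentiable of order γ. Then for i = 0,…,k the pointwise differentials pt D^i f are Borel functions whose domains are Borel subsets of ℝ^m, and X is a Borel subset of ℝ^m. -/
/-!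
A jet at `a` is encoded by the coefficients `φ` of a polynomial `x ↦ φ.eval (x - a)` centred at
`a`; these range over a finite-dimensional space. For fixed tolerances, the pairs `(a, φ)` whose
polynomial approximates `f` to the required order on a fixed ball form a closed set, and so does
its projection along a compact ball of coefficients. The sets in question are countable unions
and intersections of such projections. For the little-o condition this needs a limit argument:
coefficients `φ j` with errors `1 / (j + 1)` have a convergent subsequence, and the limit is again
a jet, because a polynomial of degree `≤ k` bounded by `c * ‖y‖ ^ k` near `0` obeys this bound
everywhere, so any two of the approximations can be compared on a ball of fixed size.
-/

open Metric Set Filter Module MeasureTheory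
open scoped Topology ENNReal

noncomputable section

/-- `P` is a polynomial map of degree at most `k`. -/
def IsPolyFn {E F : Type*} [NormedAddCommGroup E] [NormedSpace ℝ E]
    [NormedAddCommGroup F] [NormedSpace ℝ F] (k : ℕ) (P : E → F) : Prop :=
  ∃ φ : (i : Fin (k+1)) → ContinuousMultilinearMap ℝ (fun _ : Fin (i : ℕ) => E) F,
    ∀ x, P x = ∑ i, φ i fun _ => x

/-- `f : U → F` is pointwise differentiable of order `(k, α)` at `a` (order `k` when
`α = 0`), phrased equivalently via its `k`-jet: there is a polynomial `P` of degree at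
most `k` with `f a = P a` and `|f - P| = o(|x-a|^k)` (resp. `O(|x-a|^{k+α})`) on `U`. -/
def PtDiffFnAt {E F : Type*} [NormedAddCommGroup E] [NormedSpace ℝ E]
    [NormedAddCommGroup F] [NormedSpace ℝ F]
    (k : ℕ) (α : ℝ) (U : Set E) (f : E → F) (a : E) : Prop :=
  a ∈ U ∧ ∃ P : E → F, IsPolyFn k P ∧ f a = P a ∧
    (α = 0 → ∀ ε > 0, ∃ δ > 0, ∀ x ∈ U, dist x a < δ →
      ‖f x - P x‖ ≤ ε * dist x a ^ (k : ℝ)) ∧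
    (α ≠ 0 → ∃ C : ℝ, ∃ δ > 0, ∀ x ∈ U, dist x a < δ →
      ‖f x - P x‖ ≤ C * dist x a ^ ((k : ℝ) + α))

/-- `pt D^i f (a) = D`, i.e. `f` is pointwise differentiable of order `i` at `a` and the
`i`-th derivative at `a` of its `i`-jet equals `D`. -/
def IsPtDiffFnDeriv {E F : Type*} [NormedAddCommGroup E] [NormedSpace ℝ E]
    [NormedAddCommGroup F] [NormedSpace ℝ F]
    (i : ℕ) (U : Set E) (f : E → F) (a : E)
    (D : ContinuousMultilinearMap ℝ (fun _ : Fin i => E) F) : Prop :=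
  a ∈ U ∧ ∃ P : E → F, IsPolyFn i P ∧ f a = P a ∧
    (∀ ε > 0, ∃ δ > 0, ∀ x ∈ U, dist x a < δ →
      ‖f x - P x‖ ≤ ε * dist x a ^ (i : ℝ)) ∧
    D = iteratedFDeriv ℝ i P a

/-- `g` is (globally) of class `γ = (k, α)`: it is `C^k` and, when `α ≠ 0`, its `k`-th
differential is locally `α`-Hölder continuous. -/
def ClassGammaFn {E F : Type*} [NormedAddCommGroup E] [NormedSpace ℝ E]
    [NormedAddCommGroup F] [NormedSpace ℝ F] (k : ℕ) (α : ℝ) (g : E → F) : Prop :=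
  ContDiff ℝ k g ∧
  (α ≠ 0 → ∀ x : E, ∃ C : ℝ, ∃ r > 0, ∀ y ∈ ball x r, ∀ z ∈ ball x r,
    ‖iteratedFDeriv ℝ k g y - iteratedFDeriv ℝ k g z‖ ≤ C * ‖y - z‖ ^ α)

open Finset

instance {E F : Type*} [NormedAddCommGroup E] [NormedSpace ℝ E] [NormedAddCommGroup F]
    [NormedSpace ℝ F] [FiniteDimensional ℝ E] [FiniteDimensional ℝ F]
    (ι : Type*) [Fintype ι] :
    FiniteDimensional ℝ (ContinuousMultilinearMap ℝ (fun _ : ι => E) F) :=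
  Module.Finite.of_injective ContinuousMultilinearMap.toMultilinearMapLinear
    fun _ _ h => ContinuousMultilinearMap.toMultilinearMap_injective h

theorem isClosed_setOf_exists_mem_of_isCompact {X Y : Type*} [TopologicalSpace X]
    [TopologicalSpace Y] {S : Set (X × Y)} (hS : IsClosed S) {K : Set Y} (hK : IsCompact K) :
    IsClosed {x | ∃ y ∈ K, (x, y) ∈ S} := by
  have := isCompact_iff_compactSpace.mp hK
  convert isClosedMap_fst_of_compactSpace (X := X) (Y := K) _
    (hS.preimage (continuous_fst.prodMk (continuous_subtype_val.comp continuous_snd)))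
  ext x
  simp

section OneVariable

variable {F : Type*} [NormedAddCommGroup F] [NormedSpace ℝ F]

theorem norm_sum_pow_smul_le_of_forall_lt {k : ℕ} (w : ℕ → F) {c ρ : ℝ} (hρ : 0 < ρ)
    (h : ∀ t, 0 < t → t < ρ → ‖∑ d ∈ range (k + 1), t ^ d • w d‖ ≤ c * t ^ k)
    {t : ℝ} (ht : 0 ≤ t) :
    ‖∑ d ∈ range (k + 1), t ^ d • w d‖ ≤ c * t ^ k := by
  -- Dividing by `t ^ d` and letting `t → 0⁺` shows, inductively, that `w d = 0` for `d < k`.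
  have hw : ∀ d ≤ k, ‖w d‖ ≤ c * 0 ^ (k - d) := by
    intro d
    induction d using Nat.strong_induction_on with
    | _ d ih =>
    intro hd
    have hlow : ∀ e < d, w e = 0 := fun e he => norm_le_zero_iff.1 <| by
      simpa [zero_pow (Nat.sub_ne_zero_of_lt (he.trans_le hd))] using ih e he (by omega)
    let r : ℝ → F := fun t => ∑ e ∈ range (k + 1 - d), t ^ e • w (d + e)
    have hsplit : ∀ t : ℝ, ∑ e ∈ range (k + 1), t ^ e • w e = t ^ d • r t := by
      intro t
      have := Finset.sum_range_add (fun e => t ^ e • w e) d (k + 1 - d)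
      rw [Nat.add_sub_cancel' (by omega)] at this
      rw [this, Finset.sum_eq_zero fun e he => by rw [hlow e (mem_range.1 he), smul_zero],
        zero_add, Finset.smul_sum]
      simp only [pow_add, smul_smul]
    have hr0 : r 0 = w d := by
      simp [r, show k + 1 - d = k - d + 1 by omega, Finset.sum_range_succ']
    have hbound : ∀ t, 0 < t → t < ρ → ‖r t‖ ≤ c * t ^ (k - d) := by
      intro t ht0 htρ
      have htd : 0 < t ^ d := pow_pos ht0 d
      have := h t ht0 htρ
      rw [hsplit, norm_smul, Real.norm_of_nonneg htd.le, ← Nat.add_sub_cancel' hd, pow_add,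
        mul_left_comm] at this
      exact le_of_mul_le_mul_left this htd
    have hr : Continuous r := by fun_prop
    have hev : ∀ᶠ t in 𝓝[>] (0 : ℝ), ‖r t‖ ≤ c * t ^ (k - d) :=
      eventually_of_mem (Ioo_mem_nhdsGT hρ) fun t ht => hbound t ht.1 ht.2
    refine le_of_tendsto_of_tendsto ?_ ?_ hev
    · rw [← hr0]
      exact hr.norm.continuousWithinAt
    · exact ((continuous_const.mul (continuous_pow _)).tendsto 0).mono_left nhdsWithin_le_nhds
  rw [Finset.sum_range_succ, Finset.sum_eq_zero fun d hd => ?_, zero_add, norm_smul,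
    Real.norm_of_nonneg (pow_nonneg ht k), mul_comm c]
  · simpa using mul_le_mul_of_nonneg_left (hw k le_rfl) (pow_nonneg ht k)
  · have := hw d (mem_range.1 hd).le
    rw [zero_pow (Nat.sub_ne_zero_of_lt (mem_range.1 hd)), mul_zero] at this
    rw [norm_le_zero_iff.1 this, smul_zero]

end OneVariable

section Polynomials

variable {E F : Type*} [NormedAddCommGroup E] [NormedSpace ℝ E]
  [NormedAddCommGroup F] [NormedSpace ℝ F] {k : ℕ}

abbrev PolyCoeff (k : ℕ) (E F : Type*) [NormedAddCommGroup E] [NormedSpace ℝ E]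
    [NormedAddCommGroup F] [NormedSpace ℝ F] : Type _ :=
  (d : Fin (k + 1)) → ContinuousMultilinearMap ℝ (fun _ : Fin d => E) F

namespace PolyCoeff

def eval (φ : PolyCoeff k E F) (y : E) : F := ∑ d, φ d fun _ => y

def toSeries (φ : PolyCoeff k E F) : FormalMultilinearSeries ℝ E F :=
  fun d => if h : d < k + 1 then φ ⟨d, h⟩ else 0

theorem toSeries_eq_zero (φ : PolyCoeff k E F) {d : ℕ} (hd : k + 1 ≤ d) : φ.toSeries d = 0 :=
  dif_neg (by omega)

theorem eval_eq_partialSum (φ : PolyCoeff k E F) (y : E) :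
    φ.eval y = φ.toSeries.partialSum (k + 1) y := by
  rw [eval, FormalMultilinearSeries.partialSum, ← Fin.sum_univ_eq_sum_range]
  refine Finset.sum_congr rfl fun d _ => ?_
  rw [toSeries, dif_pos d.is_lt]

theorem eval_add (φ ψ : PolyCoeff k E F) : (φ + ψ).eval = φ.eval + ψ.eval := by
  ext y
  simp [eval, Finset.sum_add_distrib]

theorem eval_smul (c : ℝ) (φ : PolyCoeff k E F) : (c • φ).eval = c • φ.eval := by
  ext y
  simp [eval, Finset.smul_sum]

theorem eval_sub (φ ψ : PolyCoeff k E F) (y : E) : (φ - ψ).eval y = φ.eval y - ψ.eval y := by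
  simp [eval, Finset.sum_sub_distrib]

theorem contDiff_eval (φ : PolyCoeff k E F) {n : WithTop ℕ∞} : ContDiff ℝ n φ.eval :=
  ContDiff.sum fun d _ => (φ d).contDiff.comp (contDiff_pi.2 fun _ => contDiff_id)

theorem continuous_eval : Continuous fun p : PolyCoeff k E F × E => p.1.eval p.2 :=
  continuous_finsetSum _ fun d _ => ContinuousEval.continuous_eval.comp <|
    ((continuous_apply d).comp continuous_fst).prodMk (continuous_pi fun _ => continuous_snd)

theorem continuous_iteratedFDeriv_eval [FiniteDimensional ℝ E] [FiniteDimensional ℝ F]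
    (n : ℕ) (x : E) : Continuous fun φ : PolyCoeff k E F => iteratedFDeriv ℝ n φ.eval x :=
  let L : PolyCoeff k E F →ₗ[ℝ] ContinuousMultilinearMap ℝ (fun _ : Fin n => E) F :=
    { toFun := fun φ => iteratedFDeriv ℝ n φ.eval x
      map_add' := fun φ ψ => by
        rw [eval_add, iteratedFDeriv_add_apply φ.contDiff_eval.contDiffAt
          ψ.contDiff_eval.contDiffAt]
      map_smul' := fun c φ => by
        rw [eval_smul, iteratedFDeriv_const_smul_apply φ.contDiff_eval.contDiffAt]
        rfl }
  L.continuous_of_finiteDimensional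

theorem exists_eval_add (φ : PolyCoeff k E F) (a : E) :
    ∃ ψ : PolyCoeff k E F, ∀ y, φ.eval (a + y) = ψ.eval y := by
  have hfin := fun d => φ.toSeries_eq_zero (d := d)
  let q := φ.toSeries.changeOrigin a
  refine ⟨fun d => q d, fun y => ?_⟩
  rw [eval_eq_partialSum, ← φ.toSeries.sum_of_finite hfin,
    ← φ.toSeries.changeOrigin_eval_of_finite hfin,
    q.sum_of_finite fun _ => φ.toSeries.changeOrigin_finite_of_finite hfin,
    FormalMultilinearSeries.partialSum, ← Fin.sum_univ_eq_sum_range]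
  rfl

theorem isPolyFn_iff (P : E → F) (a : E) :
    IsPolyFn k P ↔ ∃ φ : PolyCoeff k E F, P = fun x => φ.eval (x - a) := by
  constructor
  · rintro ⟨φ, hφ⟩
    obtain ⟨ψ, hψ⟩ := exists_eval_add φ a
    exact ⟨ψ, funext fun x => by rw [← hψ, add_sub_cancel, hφ]; rfl⟩
  · rintro ⟨φ, rfl⟩
    obtain ⟨ψ, hψ⟩ := exists_eval_add φ (-a)
    exact ⟨ψ, fun x => (congrArg φ.eval (sub_eq_neg_add x a)).trans (hψ x)⟩

-- Along each line through `0` such a polynomial is a multiple of `t ^ k`.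
theorem norm_eval_le_of_forall_lt (φ : PolyCoeff k E F) {c ρ : ℝ} (hρ : 0 < ρ)
    (h : ∀ y, ‖y‖ < ρ → ‖φ.eval y‖ ≤ c * ‖y‖ ^ k) (y : E) : ‖φ.eval y‖ ≤ c * ‖y‖ ^ k := by
  rcases eq_or_ne y 0 with rfl | hy0
  · exact h 0 (by simpa using hρ)
  have hy : 0 < ‖y‖ := norm_pos_iff.2 hy0
  have hline : ∀ t : ℝ,
      φ.eval (t • y) = ∑ d ∈ range (k + 1), t ^ d • φ.toSeries d fun _ => y := by
    intro t
    simp [eval_eq_partialSum, FormalMultilinearSeries.partialSum,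
      ContinuousMultilinearMap.map_smul_univ]
  have := norm_sum_pow_smul_le_of_forall_lt (k := k) (fun d => φ.toSeries d fun _ => y)
    (c := c * ‖y‖ ^ k) (div_pos hρ hy) (fun t ht htρ => ?_) zero_le_one
  · have h1 := hline 1
    rw [one_smul] at h1
    simpa [h1] using this
  · rw [← hline, mul_assoc, ← mul_pow]
    convert h (t • y) ?_ using 3
    · rw [norm_smul, Real.norm_of_nonneg ht.le, mul_comm]
    · rwa [norm_smul, Real.norm_of_nonneg ht.le, ← lt_div_iff₀ hy]

end PolyCoeff

end Polynomials

section Jet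

variable {E F : Type*} [NormedAddCommGroup E] [NormedSpace ℝ E]
  [NormedAddCommGroup F] [NormedSpace ℝ F] {k : ℕ}

def HasJetWithinAt (f : E → F) (φ : PolyCoeff k E F) (U : Set E) (a : E) : Prop :=
  ∀ ε > 0, ∃ δ > 0, ∀ x ∈ U, dist x a < δ → ‖f x - φ.eval (x - a)‖ ≤ ε * dist x a ^ k

theorem HasJetWithinAt.apply_eq {f : E → F} {φ : PolyCoeff k E F} {U : Set E} {a : E}
    (h : HasJetWithinAt f φ U a) (ha : a ∈ U) : f a = φ.eval 0 := by
  refine sub_eq_zero.1 (norm_le_zero_iff.1 (le_of_forall_pos_le_add fun ε hε => ?_))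
  obtain ⟨δ, hδ, hfδ⟩ := h ε hε
  have := hfδ a ha (by simpa using hδ)
  rw [dist_self, sub_self] at this
  calc ‖f a - φ.eval 0‖ ≤ ε * 0 ^ k := this
    _ ≤ 0 + ε := by
      rw [zero_add]
      exact mul_le_of_le_one_right hε.le (pow_le_one₀ le_rfl zero_le_one)

theorem isPtDiffFnDeriv_iff {U : Set E} {f : E → F} {a : E}
    {D : ContinuousMultilinearMap ℝ (fun _ : Fin k => E) F} :
    IsPtDiffFnDeriv k U f a D ↔
      a ∈ U ∧ ∃ φ : PolyCoeff k E F, HasJetWithinAt f φ U a ∧ D = iteratedFDeriv ℝ k φ.eval 0 := by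
  simp only [IsPtDiffFnDeriv, Real.rpow_natCast]
  constructor
  · rintro ⟨haU, P, hP, -, hfP, rfl⟩
    obtain ⟨φ, rfl⟩ := (PolyCoeff.isPolyFn_iff P a).1 hP
    exact ⟨haU, φ, hfP, by rw [iteratedFDeriv_comp_sub, sub_self]⟩
  · rintro ⟨haU, φ, hφ, rfl⟩
    refine ⟨haU, fun x => φ.eval (x - a), (PolyCoeff.isPolyFn_iff _ a).2 ⟨φ, rfl⟩,
      by simpa using hφ.apply_eq haU, hφ, by rw [iteratedFDeriv_comp_sub, sub_self]⟩

theorem hasJetWithinAt_of_tendsto {ι : Type*} {l : Filter ι} [l.NeBot] {f : E → F}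
    {U : Set E} {a : E} (hU : U ∈ 𝓝 a) {φ : ι → PolyCoeff k E F} {ψ : PolyCoeff k E F}
    (hφ : Tendsto φ l (𝓝 ψ)) {ε : ι → ℝ} (hε : Tendsto ε l (𝓝 0))
    (hfφ : ∀ n, ∃ δ > 0, ∀ x ∈ U, dist x a < δ →
      ‖f x - (φ n).eval (x - a)‖ ≤ ε n * dist x a ^ k) :
    HasJetWithinAt f ψ U a := by
  obtain ⟨r, hr, hrU⟩ := Metric.mem_nhds_iff.1 hU
  choose δ hδ hfφ using hfφ
  have hdiff : ∀ m n y, ‖(φ m).eval y - (φ n).eval y‖ ≤ (ε m + ε n) * ‖y‖ ^ k := by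
    intro m n y
    rw [← PolyCoeff.eval_sub]
    refine PolyCoeff.norm_eval_le_of_forall_lt _ (lt_min hr (lt_min (hδ m) (hδ n)))
      (fun y hy => ?_) y
    have hyU : a + y ∈ U := hrU (by simpa using hy.trans_le (min_le_left _ _))
    have hya : dist (a + y) a = ‖y‖ := by simp
    have hm := hfφ m _ hyU (hya ▸ hy.trans_le ((min_le_right _ _).trans (min_le_left _ _)))
    have hn := hfφ n _ hyU (hya ▸ hy.trans_le ((min_le_right _ _).trans (min_le_right _ _)))
    rw [hya, add_sub_cancel_left] at hm hn
    rw [PolyCoeff.eval_sub, add_mul]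
    calc ‖(φ m).eval y - (φ n).eval y‖
        = ‖(f (a + y) - (φ n).eval y) - (f (a + y) - (φ m).eval y)‖ := by congr 1; abel
      _ ≤ ε m * ‖y‖ ^ k + ε n * ‖y‖ ^ k := by
        rw [add_comm (ε m * _)]
        exact norm_sub_le_of_le hn hm
  have hlim : ∀ m y, ‖(φ m).eval y - ψ.eval y‖ ≤ ε m * ‖y‖ ^ k := by
    intro m y
    have hev := (PolyCoeff.continuous_eval.tendsto (ψ, y)).comp
      (hφ.prodMk_nhds tendsto_const_nhds)
    simpa using le_of_tendsto_of_tendsto (tendsto_const_nhds.sub hev).norm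
      ((tendsto_const_nhds.add hε).mul_const _) (.of_forall fun n => hdiff m n y)
  intro η hη
  obtain ⟨m, hm⟩ := (hε.eventually (gt_mem_nhds (half_pos hη))).exists
  refine ⟨δ m, hδ m, fun x hx hxa => ?_⟩
  calc ‖f x - ψ.eval (x - a)‖
      ≤ ‖f x - (φ m).eval (x - a)‖ + ‖(φ m).eval (x - a) - ψ.eval (x - a)‖ :=
        norm_sub_le_norm_sub_add_norm_sub _ _ _
    _ ≤ ε m * dist x a ^ k + ε m * dist x a ^ k :=
        add_le_add (hfφ m x hx hxa) (dist_eq_norm x a ▸ hlim m _)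
    _ ≤ η * dist x a ^ k := by nlinarith [pow_nonneg (dist_nonneg (x := x) (y := a)) k]

end Jet

section Measurability

variable {E F : Type*} [NormedAddCommGroup E] [NormedSpace ℝ E]
  [NormedAddCommGroup F] [NormedSpace ℝ F]

def jetApproxSet (U : Set E) (f : E → F) (k : ℕ) (r : ℝ) (g : ℝ → ℝ) :
    Set (E × PolyCoeff k E F) :=
  {p | ∀ x ∈ U, dist x p.1 < r → ‖f x - p.2.eval (x - p.1)‖ ≤ g (dist x p.1)}

theorem isClosed_jetApproxSet (U : Set E) (f : E → F) (k : ℕ) (r : ℝ) {g : ℝ → ℝ}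
    (hg : Continuous g) : IsClosed (jetApproxSet U f k r g) := by
  simp only [jetApproxSet, ofPred_forall]
  refine isClosed_iInter fun x => isClosed_iInter fun _ => isClosed_imp ?_ (isClosed_le ?_ ?_)
  · exact isOpen_lt (continuous_const.dist continuous_fst) continuous_const
  · exact (continuous_const.sub (PolyCoeff.continuous_eval.comp
      (continuous_snd.prodMk (continuous_const.sub continuous_fst)))).norm
  · exact hg.comp (continuous_const.dist continuous_fst)

theorem ptDiffFnAt_zero_iff {k : ℕ} {U : Set E} {f : E → F} {a : E} :
    PtDiffFnAt k 0 U f a ↔ ∃ D, IsPtDiffFnDeriv k U f a D := by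
  constructor
  · rintro ⟨haU, P, hP, hfa, h0, -⟩
    exact ⟨_, haU, P, hP, hfa, h0 rfl, rfl⟩
  · rintro ⟨-, haU, P, hP, hfa, h, -⟩
    exact ⟨haU, P, hP, hfa, fun _ => h, fun h => absurd rfl h⟩

variable [FiniteDimensional ℝ E] [FiniteDimensional ℝ F] [MeasurableSpace E] [BorelSpace E]

theorem measurableSet_setOf_isPtDiffFnDeriv_mem {U : Set E} (hU : IsOpen U) (f : E → F)
    (k : ℕ) {C : Set (ContinuousMultilinearMap ℝ (fun _ : Fin k => E) F)} (hC : IsClosed C) :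
    MeasurableSet {a | ∃ D ∈ C, IsPtDiffFnDeriv k U f a D} := by
  have hD := PolyCoeff.continuous_iteratedFDeriv_eval (k := k) (E := E) (F := F) k 0
  let A : ℕ → ℕ → Set (E × PolyCoeff k E F) := fun j l =>
    jetApproxSet U f k (1 / (l + 1)) (fun t => 1 / (j + 1) * t ^ k) ∩
      {p | iteratedFDeriv ℝ k p.2.eval 0 ∈ C}
  have hA : ∀ j l, IsClosed (A j l) := fun j l =>
    (isClosed_jetApproxSet U f k _ (by fun_prop)).inter (hC.preimage (hD.comp continuous_snd))
  suffices {a | ∃ D ∈ C, IsPtDiffFnDeriv k U f a D} =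
      U ∩ ⋃ N : ℕ, ⋂ j : ℕ, ⋃ l : ℕ, {a | ∃ φ ∈ closedBall 0 N, (a, φ) ∈ A j l} by
    rw [this]
    exact hU.measurableSet.inter <| .iUnion fun N => .iInter fun j => .iUnion fun l =>
      (isClosed_setOf_exists_mem_of_isCompact (hA j l) (isCompact_closedBall _ _)).measurableSet
  ext a
  simp only [isPtDiffFnDeriv_iff, mem_ofPred_eq, mem_inter_iff, mem_iUnion, mem_iInter]
  constructor
  · rintro ⟨_, hDC, haU, φ, hφ, rfl⟩
    refine ⟨haU, ⌈‖φ‖⌉₊, fun j => ?_⟩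
    obtain ⟨δ, hδ, hfφ⟩ := hφ (1 / (j + 1)) Nat.one_div_pos_of_nat
    obtain ⟨l, hl⟩ := exists_nat_one_div_lt hδ
    exact ⟨l, φ, mem_closedBall_zero_iff.2 (Nat.le_ceil _),
      fun x hx hxa => hfφ x hx (hxa.trans hl), hDC⟩
  · rintro ⟨haU, N, hN⟩
    choose l φ hφN hφ hφC using hN
    obtain ⟨ψ, -, σ, hσ, hψ⟩ := (isCompact_closedBall (0 : PolyCoeff k E F) N).tendsto_subseq hφN
    refine ⟨_, hC.mem_of_tendsto ((hD.tendsto ψ).comp hψ) (.of_forall fun s => hφC (σ s)), haU, ψ,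
      hasJetWithinAt_of_tendsto (hU.mem_nhds haU) hψ
        (tendsto_one_div_add_atTop_nhds_zero_nat.comp hσ.tendsto_atTop)
        fun s => ⟨_, Nat.one_div_pos_of_nat, hφ (σ s)⟩, rfl⟩

theorem measurableSet_setOf_ptDiffFnAt_of_pos (k : ℕ) {α : ℝ} (hα : 0 < α) {U : Set E}
    (hU : MeasurableSet U) (f : E → F) : MeasurableSet {a | PtDiffFnAt k α U f a} := by
  have hkα : 0 < (k : ℝ) + α := by positivity
  let B : ℕ → ℕ → Set (E × PolyCoeff k E F) := fun j l =>
    jetApproxSet U f k (1 / (l + 1)) fun t => j * t ^ ((k : ℝ) + α)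
  have hB : ∀ j l, IsClosed (B j l) := fun j l =>
    isClosed_jetApproxSet U f k _ (continuous_const.mul (Real.continuous_rpow_const hkα.le))
  suffices {a | PtDiffFnAt k α U f a} =
      U ∩ ⋃ N : ℕ, ⋃ j : ℕ, ⋃ l : ℕ, {a | ∃ φ ∈ closedBall 0 N, (a, φ) ∈ B j l} by
    rw [this]
    exact hU.inter <| .iUnion fun N => .iUnion fun j => .iUnion fun l =>
      (isClosed_setOf_exists_mem_of_isCompact (hB j l) (isCompact_closedBall _ _)).measurableSet
  ext a
  simp only [PtDiffFnAt, PolyCoeff.isPolyFn_iff _ a, mem_ofPred_eq, mem_inter_iff, mem_iUnion]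
  constructor
  · rintro ⟨haU, _, ⟨φ, rfl⟩, -, -, hO⟩
    obtain ⟨c, δ, hδ, hc⟩ := hO hα.ne'
    obtain ⟨j, hj⟩ := exists_nat_ge c
    obtain ⟨l, hl⟩ := exists_nat_one_div_lt hδ
    exact ⟨haU, ⌈‖φ‖⌉₊, j, l, φ, mem_closedBall_zero_iff.2 (Nat.le_ceil _), fun x hx hxa =>
      (hc x hx (hxa.trans hl)).trans (mul_le_mul_of_nonneg_right hj (by positivity))⟩
  · rintro ⟨haU, -, j, l, φ, -, hφ⟩
    have hfa : ‖f a - φ.eval (a - a)‖ ≤ j * dist a a ^ ((k : ℝ) + α) :=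
      hφ a haU (by rw [dist_self]; exact Nat.one_div_pos_of_nat)
    rw [dist_self, Real.zero_rpow hkα.ne', mul_zero, norm_le_zero_iff, sub_eq_zero] at hfa
    exact ⟨haU, _, ⟨φ, rfl⟩, hfa, fun h => absurd h hα.ne',
      fun _ => ⟨j, _, Nat.one_div_pos_of_nat, hφ⟩⟩

end Measurability

theorem stmt_8_general (k m n : ℕ)
    (α : ℝ) (hα0 : 0 ≤ α)
    (U : Set (EuclideanSpace ℝ (Fin m))) (hU : IsOpen U)
    (f : EuclideanSpace ℝ (Fin m) → EuclideanSpace ℝ (Fin (n - m))) :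
    (∀ i : ℕ, i ≤ k →
      MeasurableSet {a : EuclideanSpace ℝ (Fin m) |
        ∃ D : ContinuousMultilinearMap ℝ
            (fun _ : Fin i => EuclideanSpace ℝ (Fin m)) (EuclideanSpace ℝ (Fin (n - m))),
          IsPtDiffFnDeriv i U f a D} ∧
      ∀ C : Set (ContinuousMultilinearMap ℝ
          (fun _ : Fin i => EuclideanSpace ℝ (Fin m)) (EuclideanSpace ℝ (Fin (n - m)))),
        IsClosed C →
        MeasurableSet {a : EuclideanSpace ℝ (Fin m) |
          ∃ D ∈ C, IsPtDiffFnDeriv i U f a D}) ∧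
    MeasurableSet {a : EuclideanSpace ℝ (Fin m) | PtDiffFnAt k α U f a} := by
  refine ⟨fun i _ => ⟨?_, fun C hC => measurableSet_setOf_isPtDiffFnDeriv_mem hU f i hC⟩, ?_⟩
  · simpa using measurableSet_setOf_isPtDiffFnDeriv_mem hU f i isClosed_univ
  rcases hα0.eq_or_lt with rfl | hα
  · simpa [ptDiffFnAt_zero_iff] using measurableSet_setOf_isPtDiffFnDeriv_mem hU f k isClosed_univ
  · exact measurableSet_setOf_ptDiffFnAt_of_pos k hα hU.measurableSet f

/-- the pointwise differentials `pt D^i f` are Borel functions with Borel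
domains, and the set of points of pointwise differentiability of order `γ` is Borel. -/
theorem stmt_8 (k m n : ℕ) (hm : 0 < m) (hn : 0 < n) (hmn : m < n)
    (α : ℝ) (hα0 : 0 ≤ α) (hα1 : α ≤ 1)
    (U : Set (EuclideanSpace ℝ (Fin m))) (hU : IsOpen U)
    (f : EuclideanSpace ℝ (Fin m) → EuclideanSpace ℝ (Fin (n - m))) :
    (∀ i : ℕ, i ≤ k →
      MeasurableSet {a : EuclideanSpace ℝ (Fin m) |
        ∃ D : ContinuousMultilinearMap ℝ
            (fun _ : Fin i => EuclideanSpace ℝ (Fin m)) (EuclideanSpace ℝ (Fin (n - m))),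
          IsPtDiffFnDeriv i U f a D} ∧
      ∀ C : Set (ContinuousMultilinearMap ℝ
          (fun _ : Fin i => EuclideanSpace ℝ (Fin m)) (EuclideanSpace ℝ (Fin (n - m)))),
        IsClosed C →
        MeasurableSet {a : EuclideanSpace ℝ (Fin m) |
          ∃ D ∈ C, IsPtDiffFnDeriv i U f a D}) ∧
    MeasurableSet {a : EuclideanSpace ℝ (Fin m) | PtDiffFnAt k α U f a} :=
  stmt_8_general k m n α hα0 U hU f

end
end

section
/- Suppose n is a positive integer, B ⊂ ℝⁿ, and (h_j) is a sequence of bijections of ℝⁿ onto ℝⁿ such that lim_{j→∞} h_j(x) = x for every x ∈ ℝⁿ and such that h_j⁻¹ converges to the identity uniformly on compact subsets of ℝⁿ, i.e. lim_{j→∞} sup{ |h_j⁻¹(χ) − χ| : χ ∈ K } = 0 for every compact K ⊂ ℝⁿ. Then lim_{j→∞} dist(x, h_j[B]) = dist(x, B) for every x ∈ ℝⁿ. -/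
open Metric Set Filter
open scoped Topology

noncomputable section

/-- if bijections `h_j` of `ℝⁿ` converge pointwise to the identity and their
inverses converge to the identity uniformly on compact sets, then the distance functions
of the image sets `h_j[B]` converge pointwise to the distance function of `B`. -/
theorem stmt_13 (n : ℕ) (hn : 0 < n) (B : Set (EuclideanSpace ℝ (Fin n)))
    (h g : ℕ → EuclideanSpace ℝ (Fin n) → EuclideanSpace ℝ (Fin n))
    (hinv : ∀ j, Function.LeftInverse (g j) (h j) ∧ Function.RightInverse (g j) (h j))
    (hlim : ∀ x, Tendsto (fun j => h j x) atTop (𝓝 x))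
    (hunif : ∀ K : Set (EuclideanSpace ℝ (Fin n)), IsCompact K →
      ∀ ε > 0, ∃ N : ℕ, ∀ j ≥ N, ∀ χ ∈ K, ‖g j χ - χ‖ ≤ ε) :
    ∀ x, Tendsto (fun j => infDist x (h j '' B)) atTop (𝓝 (infDist x B)) := by
  intro x
  rcases B.eq_empty_or_nonempty with rfl | hB
  · simp only [Set.image_empty]
    exact tendsto_const_nhds
  · rw [Metric.tendsto_atTop]
    intro ε hε
    set d := infDist x B with hd
    have hε4 : (0:ℝ) < ε / 4 := by linarith
    obtain ⟨b, hbB, hb⟩ := (Metric.infDist_lt_iff hB).mp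
      (show d < d + ε / 4 by linarith)
    -- N1 : pointwise convergence at b
    obtain ⟨N1, hN1⟩ := Metric.tendsto_atTop.mp (hlim b) (ε/4) hε4
    -- N2 : uniform convergence on closed ball
    obtain ⟨N2, hN2⟩ := hunif (closedBall x (d + ε)) (isCompact_closedBall x _) (ε/4) hε4
    refine ⟨max N1 N2, fun j hj => ?_⟩
    have hj1 : j ≥ N1 := le_trans (le_max_left _ _) hj
    have hj2 : j ≥ N2 := le_trans (le_max_right _ _) hj
    have himg : (h j '' B).Nonempty := hB.image _
    -- upper bound : infDist_j < d + ε/2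
    have hup : infDist x (h j '' B) < d + ε / 2 := by
      have h1 : dist x (h j b) ≤ dist x b + dist b (h j b) := dist_triangle _ _ _
      have h2 : dist b (h j b) < ε / 4 := by rw [dist_comm]; exact hN1 j hj1
      calc infDist x (h j '' B) ≤ dist x (h j b) :=
            Metric.infDist_le_dist_of_mem ⟨b, hbB, rfl⟩
        _ < d + ε / 4 + ε / 4 := by linarith
        _ = d + ε / 2 := by ring
    -- lower bound
    obtain ⟨y, hyI, hy⟩ := (Metric.infDist_lt_iff himg).mp
      (show infDist x (h j '' B) < infDist x (h j '' B) + ε / 4 by linarith)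
    obtain ⟨b', hb'B, rfl⟩ := hyI
    have hyK : h j b' ∈ closedBall x (d + ε) := by
      rw [Metric.mem_closedBall, dist_comm]
      have := hup
      linarith
    have hgy : ‖g j (h j b') - h j b'‖ ≤ ε / 4 := hN2 j hj2 _ hyK
    have hgb : g j (h j b') = b' := (hinv j).1 b'
    have hlow : d ≤ infDist x (h j '' B) + ε / 2 := by
      have h1 : d ≤ dist x b' := Metric.infDist_le_dist_of_mem hb'B
      have h2 : dist x b' ≤ dist x (h j b') + dist (h j b') b' := dist_triangle _ _ _
      have h3 : dist (h j b') b' ≤ ε / 4 := by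
        rw [hgb] at hgy
        rw [dist_comm, dist_eq_norm]
        exact hgy
      linarith
    rw [Real.dist_eq, abs_lt]
    constructor <;> linarith

end
end
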